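/- Let $H$ be a quasi-Hopf algebra with quasi-antipode $(S,\alpha,\beta)$ and $G = \sum g_j\otimes g^j$ a twist. Then the element $\bar\gamma_G$ constructed from the twisted structure equals $G\cdot\Delta(g_j)\cdot\bar\gamma\cdot(S\otimes S)(G^T\Delta^T(g^j))$, where $\bar\gamma = \sum \bar A_i\beta S(\bar D_i)\otimes\bar B_i\beta S(\bar C_i)$ with $\sum\bar A_i\otimes\bar B_i\otimes\bar C_i\otimes\bar D_i = (\Delta\otimes 1\otimes 1)\Phi^{-1}\cdot(\Phi\otimes 1)$. -/

import Mathlib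

open TensorProduct

noncomputable section

namespace QHA

variable (K : Type*) [Field K] (H : Type*) [Ring H] [Algebra K H]

abbrev T2 := H ⊗[K] H
abbrev T3 := H ⊗[K] (H ⊗[K] H)
abbrev T4 := H ⊗[K] (H ⊗[K] (H ⊗[K] H))

/-- multiplication `x ⊗ y ↦ x * y`. -/
def mul2 : T2 K H →ₗ[K] H := LinearMap.mul' K H

/-- `Δ ⊗ 1`, re-associated to land in `H ⊗ (H ⊗ H)`. -/
def DL (Δl : H →ₗ[K] T2 K H) : T2 K H →ₗ[K] T3 K H :=
  (TensorProduct.assoc K H H H).toLinearMap ∘ₗ TensorProduct.map Δl LinearMap.id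

/-- `1 ⊗ Δ`. -/
def DR (Δl : H →ₗ[K] T2 K H) : T2 K H →ₗ[K] T3 K H :=
  TensorProduct.map LinearMap.id Δl

/-- embed `x ⊗ y ↦ x ⊗ y ⊗ 1`. -/
def j12 : T2 K H →ₗ[K] T3 K H :=
  TensorProduct.map LinearMap.id ((TensorProduct.mk K H H).flip 1)

/-- embed `x ⊗ y ↦ 1 ⊗ x ⊗ y`. -/
def j23 : T2 K H →ₗ[K] T3 K H := TensorProduct.mk K H (H ⊗[K] H) 1

/-- embed `x ⊗ y ↦ x ⊗ 1 ⊗ y`. -/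
def j13two : T2 K H →ₗ[K] T3 K H :=
  TensorProduct.map LinearMap.id (TensorProduct.mk K H H 1)

/-- `Δ ⊗ 1 ⊗ 1` on three legs. -/
def d12 (Δl : H →ₗ[K] T2 K H) : T3 K H →ₗ[K] T4 K H :=
  (TensorProduct.assoc K H H (H ⊗[K] H)).toLinearMap ∘ₗ TensorProduct.map Δl LinearMap.id

/-- `1 ⊗ Δ ⊗ 1` on three legs. -/
def d23 (Δl : H →ₗ[K] T2 K H) : T3 K H →ₗ[K] T4 K H :=
  TensorProduct.map LinearMap.id (DL K H Δl)

/-- `1 ⊗ 1 ⊗ Δ` on three legs. -/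
def d34 (Δl : H →ₗ[K] T2 K H) : T3 K H →ₗ[K] T4 K H :=
  TensorProduct.map LinearMap.id (TensorProduct.map LinearMap.id Δl)

/-- embed `x ⊗ y ⊗ z ↦ x ⊗ y ⊗ z ⊗ 1`. -/
def j123 : T3 K H →ₗ[K] T4 K H :=
  TensorProduct.map LinearMap.id (TensorProduct.map LinearMap.id ((TensorProduct.mk K H H).flip 1))

/-- embed `x ↦ 1 ⊗ x`. -/
def j234 : T3 K H →ₗ[K] T4 K H := TensorProduct.mk K H (T3 K H) 1

/-- `ε ⊗ 1` on two legs. -/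
def eL (εl : H →ₗ[K] K) : T2 K H →ₗ[K] H :=
  (TensorProduct.lid K H).toLinearMap ∘ₗ TensorProduct.map εl LinearMap.id

/-- `1 ⊗ ε` on two legs. -/
def eR (εl : H →ₗ[K] K) : T2 K H →ₗ[K] H :=
  (TensorProduct.rid K H).toLinearMap ∘ₗ TensorProduct.map LinearMap.id εl

/-- `ε ⊗ 1 ⊗ 1`. -/
def e1 (εl : H →ₗ[K] K) : T3 K H →ₗ[K] T2 K H :=
  (TensorProduct.lid K (T2 K H)).toLinearMap ∘ₗ TensorProduct.map εl LinearMap.id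

/-- `1 ⊗ ε ⊗ 1`. -/
def e2 (εl : H →ₗ[K] K) : T3 K H →ₗ[K] T2 K H :=
  TensorProduct.map LinearMap.id (eL K H εl)

/-- `1 ⊗ 1 ⊗ ε`. -/
def e3 (εl : H →ₗ[K] K) : T3 K H →ₗ[K] T2 K H :=
  TensorProduct.map LinearMap.id (eR K H εl)

/-- the permutation `x ⊗ y ⊗ z ↦ x ⊗ z ⊗ y`. -/
def p132 : T3 K H ≃ₗ[K] T3 K H :=
  TensorProduct.congr (LinearEquiv.refl K H) (TensorProduct.comm K H H)

/-- the permutation `x ⊗ y ⊗ z ↦ y ⊗ x ⊗ z`. -/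
def p213 : T3 K H ≃ₗ[K] T3 K H := TensorProduct.leftComm K H H H

/-- `Φ ↦ Φ_{231}`, i.e. `x ⊗ y ⊗ z ↦ z ⊗ x ⊗ y`. -/
def p231 : T3 K H ≃ₗ[K] T3 K H := (p132 K H).trans (p213 K H)

/-- `Φ ↦ Φ_{312}`, i.e. `x ⊗ y ⊗ z ↦ y ⊗ z ⊗ x`. -/
def p312 : T3 K H ≃ₗ[K] T3 K H := (p213 K H).trans (p132 K H)

/-- total reversal `x ⊗ y ⊗ z ↦ z ⊗ y ⊗ x`. -/
def p321 : T3 K H ≃ₗ[K] T3 K H :=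
  (p132 K H).trans ((TensorProduct.comm K H (H ⊗[K] H)).trans (TensorProduct.assoc K H H H))

/-- A quasi-bialgebra structure on `H`. -/
structure QuasiBialgebra : Type _ where
  Δ : H →ₐ[K] T2 K H
  ε : H →ₐ[K] K
  Φ : (T3 K H)ˣ
  quasiCoassoc : ∀ a : H,
    (Φ : T3 K H) * DR K H Δ.toLinearMap (Δ a) =
      DL K H Δ.toLinearMap (Δ a) * (Φ : T3 K H)
  pentagon :
    d12 K H Δ.toLinearMap (Φ : T3 K H) * d34 K H Δ.toLinearMap (Φ : T3 K H) =
      j123 K H (Φ : T3 K H) * d23 K H Δ.toLinearMap (Φ : T3 K H) * j234 K H (Φ : T3 K H)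
  counit_left : ∀ a : H, eL K H ε.toLinearMap (Δ a) = a
  counit_right : ∀ a : H, eR K H ε.toLinearMap (Δ a) = a
  eps_mid : e2 K H ε.toLinearMap (Φ : T3 K H) = 1

/-- `x ⊗ (y ⊗ z) ↦ S'(x) * α' * y * β * S(z)` (the mixed `v`-expression). -/
def mixPhi (S' S : H →ₗ[K] H) (α' β : H) : T3 K H →ₗ[K] H :=
  mul2 K H ∘ₗ TensorProduct.map S'
    (mul2 K H ∘ₗ TensorProduct.map (LinearMap.mulLeft K α') (LinearMap.mulLeft K β ∘ₗ S))

/-- `x ⊗ (y ⊗ z) ↦ x * β * S(y) * α * z`. -/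
def antPhiInvMap (S : H →ₗ[K] H) (α β : H) : T3 K H →ₗ[K] H :=
  mul2 K H ∘ₗ TensorProduct.map LinearMap.id
    (mul2 K H ∘ₗ TensorProduct.map (LinearMap.mulLeft K β ∘ₗ S) (LinearMap.mulLeft K α))

/-- `(S, α, β)` is a quasi-antipode for the quasi-bialgebra `qb`. -/
structure IsQuasiAntipode (qb : QuasiBialgebra K H) (S : H →ₗ[K] H) (α β : H) : Prop where
  map_one : S 1 = 1
  anti_mul : ∀ a b : H, S (a * b) = S b * S a
  phi : mixPhi K H S S α β (qb.Φ : T3 K H) = 1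
  phi_inv : antPhiInvMap K H S α β ((qb.Φ⁻¹ : (T3 K H)ˣ) : T3 K H) = 1
  antialpha : ∀ a : H,
    mul2 K H (TensorProduct.map S LinearMap.id (qb.Δ a) * (α ⊗ₜ[K] (1 : H))) = qb.ε a • α
  antibeta : ∀ a : H,
    mul2 K H (TensorProduct.map LinearMap.id S (qb.Δ a) * (β ⊗ₜ[K] (1 : H))) = qb.ε a • β

/-- `F` is a twist for `qb`: counit property (invertibility is part of being a unit). -/
structure IsTwist (qb : QuasiBialgebra K H) (F : (T2 K H)ˣ) : Prop where
  eps_left : eL K H qb.ε.toLinearMap (F : T2 K H) = 1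
  eps_right : eR K H qb.ε.toLinearMap (F : T2 K H) = 1

/-- the twisted coassociator `Φ_F`. -/
def twistPhiE (Δl : H →ₗ[K] T2 K H) (Φel : T3 K H) (F : (T2 K H)ˣ) : T3 K H :=
  j12 K H (F : T2 K H) * DL K H Δl (F : T2 K H) * Φel *
    DR K H Δl ((F⁻¹ : (T2 K H)ˣ) : T2 K H) * j23 K H ((F⁻¹ : (T2 K H)ˣ) : T2 K H)

/-- the inverse of the twisted coassociator `Φ_F⁻¹`. -/
def twistPhiInvE (Δl : H →ₗ[K] T2 K H) (Φinvel : T3 K H) (F : (T2 K H)ˣ) : T3 K H :=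
  j23 K H (F : T2 K H) * DR K H Δl (F : T2 K H) * Φinvel *
    DL K H Δl ((F⁻¹ : (T2 K H)ˣ) : T2 K H) * j12 K H ((F⁻¹ : (T2 K H)ˣ) : T2 K H)

/-- `α_F = Σ S(f̄ᵢ) α f̄ⁱ`. -/
def twistAlpha (S : H →ₗ[K] H) (α : H) (F : (T2 K H)ˣ) : H :=
  mul2 K H (TensorProduct.map S LinearMap.id ((F⁻¹ : (T2 K H)ˣ) : T2 K H) * (α ⊗ₜ[K] (1 : H)))

/-- `β_F = Σ fᵢ β S(fⁱ)`. -/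
def twistBeta (S : H →ₗ[K] H) (β : H) (F : (T2 K H)ˣ) : H :=
  mul2 K H (TensorProduct.map LinearMap.id S (F : T2 K H) * (β ⊗ₜ[K] (1 : H)))

/-- the twisted coproduct `Δ_F(a) = F Δ(a) F⁻¹`, as a linear map. -/
def twistDelta (Δl : H →ₗ[K] T2 K H) (F : (T2 K H)ˣ) : H →ₗ[K] T2 K H :=
  LinearMap.mulLeft K (F : T2 K H) ∘ₗ
    LinearMap.mulRight K ((F⁻¹ : (T2 K H)ˣ) : T2 K H) ∘ₗ Δl

/-- `x ⊗ y ↦ x * α * y`. -/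
def mulMid (α : H) : T2 K H →ₗ[K] H :=
  mul2 K H ∘ₗ TensorProduct.map (LinearMap.mulRight K α) LinearMap.id

/-- `a ⊗ b ⊗ c ⊗ d ↦ (S(b) α c) ⊗ (S(a) α d)`, the `γ` pairing. -/
def gammaMap (S : H →ₗ[K] H) (α : H) : T4 K H →ₗ[K] T2 K H :=
  TensorProduct.map (mulMid K H α) (mulMid K H α) ∘ₗ
    (TensorProduct.assoc K H H (T2 K H)).symm.toLinearMap ∘ₗ
    TensorProduct.map LinearMap.id (TensorProduct.leftComm K H H H).toLinearMap ∘ₗ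
    (TensorProduct.leftComm K H H (T2 K H)).toLinearMap ∘ₗ
    TensorProduct.map S (TensorProduct.map S (LinearMap.id : T2 K H →ₗ[K] T2 K H))

/-- the Drinfeld element `γ = Σ S(Bᵢ) α Cᵢ ⊗ S(Aᵢ) α Dᵢ`
with `Σ Aᵢ⊗Bᵢ⊗Cᵢ⊗Dᵢ = (Φ⁻¹ ⊗ 1)·(Δ⊗1⊗1)Φ`. -/
def gammaEl (Δl : H →ₗ[K] T2 K H) (Φel Φinvel : T3 K H) (S : H →ₗ[K] H) (α : H) : T2 K H :=
  gammaMap K H S α (j123 K H Φinvel * d12 K H Δl Φel)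

/-- `y ⊗ z ↦ y * β * S(z)`. -/
def gBeta (S : H →ₗ[K] H) (β : H) : T2 K H →ₗ[K] H :=
  mul2 K H ∘ₗ TensorProduct.map LinearMap.id (LinearMap.mulLeft K β ∘ₗ S)

/-- the canonical Drinfeld twist expression
`F_δ = Σ (S⊗S)Δᵀ(X_ν) · γ · Δ(Y_ν β S(Z_ν))`. -/
def drinfeldExpr (Δl : H →ₗ[K] T2 K H) (Φel Φinvel : T3 K H) (S : H →ₗ[K] H) (α β : H) :
    T2 K H :=
  LinearMap.mul' K (T2 K H)
    (TensorProduct.map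
      (TensorProduct.map S S ∘ₗ (TensorProduct.comm K H H).toLinearMap ∘ₗ Δl)
      (LinearMap.mulLeft K (gammaEl K H Δl Φel Φinvel S α) ∘ₗ Δl ∘ₗ gBeta K H S β)
      Φel)

/-- `a ⊗ b ⊗ c ⊗ d ↦ (a β S(d)) ⊗ (b β S(c))`, the `γ̄` pairing. -/
def gammaBarMap (S : H →ₗ[K] H) (β : H) : T4 K H →ₗ[K] T2 K H :=
  TensorProduct.map (mulMid K H β) (mulMid K H β) ∘ₗ
    (TensorProduct.assoc K H H (T2 K H)).symm.toLinearMap ∘ₗ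
    TensorProduct.map LinearMap.id (TensorProduct.leftComm K H H H).toLinearMap ∘ₗ
    TensorProduct.map LinearMap.id
      (TensorProduct.map LinearMap.id (TensorProduct.comm K H H).toLinearMap) ∘ₗ
    TensorProduct.map LinearMap.id
      (TensorProduct.map LinearMap.id (TensorProduct.map S S))

/-- the element `γ̄ = Σ Āᵢ β S(D̄ᵢ) ⊗ B̄ᵢ β S(C̄ᵢ)`
with `Σ Āᵢ⊗B̄ᵢ⊗C̄ᵢ⊗D̄ᵢ = (Δ⊗1⊗1)Φ⁻¹·(Φ⊗1)`. -/
def gammaBarEl (Δl : H →ₗ[K] T2 K H) (Φel Φinvel : T3 K H) (S : H →ₗ[K] H) (β : H) :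
    T2 K H :=
  gammaBarMap K H S β (d12 K H Δl Φinvel * j123 K H Φel)

/-- the canonical inverse Drinfeld twist expression
`F_δ⁻¹ = Σ Δ(S(X_ν) α Y_ν) · γ̄ · (S⊗S)Δᵀ(Z_ν)`. -/
def drinfeldInvExpr (Δl : H →ₗ[K] T2 K H) (Φel Φinvel : T3 K H) (S : H →ₗ[K] H) (α β : H) :
    T2 K H :=
  LinearMap.mul' K (T2 K H)
    (TensorProduct.map
      (LinearMap.mulRight K (gammaBarEl K H Δl Φel Φinvel S β) ∘ₗ Δl ∘ₗ
        (mul2 K H ∘ₗ TensorProduct.map (LinearMap.mulRight K α ∘ₗ S) LinearMap.id))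
      (TensorProduct.map S S ∘ₗ (TensorProduct.comm K H H).toLinearMap ∘ₗ Δl)
      ((TensorProduct.assoc K H H H).symm.toLinearMap Φel))

/-- the unit `Fᵀ` obtained by flipping a unit of `H ⊗ H`. -/
def unitComm (u : (T2 K H)ˣ) : (T2 K H)ˣ where
  val := Algebra.TensorProduct.comm K H H (u : T2 K H)
  inv := Algebra.TensorProduct.comm K H H ((u⁻¹ : (T2 K H)ˣ) : T2 K H)
  val_inv := by rw [← map_mul, Units.mul_inv, map_one]
  inv_val := by rw [← map_mul, Units.inv_mul, map_one]

/-- `R` is a quasi-triangular `R`-matrix for `qb`. -/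
structure IsRMatrix (qb : QuasiBialgebra K H) (R : (T2 K H)ˣ) : Prop where
  intertwine : ∀ a : H,
    (TensorProduct.comm K H H) (qb.Δ a) * (R : T2 K H) = (R : T2 K H) * qb.Δ a
  hexagon1 :
    DL K H qb.Δ.toLinearMap (R : T2 K H) =
      p231 K H ((qb.Φ⁻¹ : (T3 K H)ˣ) : T3 K H) * j13two K H (R : T2 K H) *
        p132 K H (qb.Φ : T3 K H) * j23 K H (R : T2 K H) *
        ((qb.Φ⁻¹ : (T3 K H)ˣ) : T3 K H)
  hexagon2 :
    DR K H qb.Δ.toLinearMap (R : T2 K H) =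
      p312 K H (qb.Φ : T3 K H) * j13two K H (R : T2 K H) *
        p213 K H ((qb.Φ⁻¹ : (T3 K H)ˣ) : T3 K H) * j12 K H (R : T2 K H) *
        (qb.Φ : T3 K H)

/-- the defining property of the (Drinfeld–Reshetikhin type) `u`-operator
associated with an `R`-matrix `Q`. -/
def uProp (S Sinv : H →ₗ[K] H) (α β : H) (Q : (T2 K H)ˣ) (u : Hˣ) : Prop :=
  (∀ a : H, S (S a) = (u : H) * a * ((u⁻¹ : Hˣ) : H)) ∧
  ((u : H) * Sinv α = twistAlpha K H S α Q) ∧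
  (twistBeta K H S β Q * (u : H) = Sinv β)

/-- the explicit formula `u = Σ S(Y_ν β S(Z_ν)) αQ X_ν`. -/
def uExpr (Φel : T3 K H) (S : H →ₗ[K] H) (αQ β : H) : H :=
  mul2 K H (TensorProduct.map (LinearMap.mulRight K αQ ∘ₗ S ∘ₗ gBeta K H S β)
    LinearMap.id ((TensorProduct.comm K H (H ⊗[K] H)) Φel))

end QHA

namespace QHA

section Stmt13Aux

set_option synthInstance.maxHeartbeats 400000
set_option maxHeartbeats 4000000

variable {K : Type*} [Field K] {H : Type*} [Ring H] [Algebra K H]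

/-- induction principle for 4-fold pure tensors. -/
theorem t4_ind {P : T4 K H → Prop} (hz : P 0)
    (ht : ∀ a b c d : H, P (a ⊗ₜ (b ⊗ₜ (c ⊗ₜ d))))
    (ha : ∀ x y, P x → P y → P (x + y)) : ∀ x, P x := by
  intro x
  induction x using TensorProduct.induction_on with
  | zero => exact hz
  | add x y hx hy => exact ha x y hx hy
  | tmul a m =>
    induction m using TensorProduct.induction_on with
    | zero => simpa using hz
    | add m1 m2 h1 h2 => rw [TensorProduct.tmul_add]; exact ha _ _ h1 h2
    | tmul b m2 =>
      induction m2 using TensorProduct.induction_on with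
      | zero => simpa using hz
      | add n1 n2 h1 h2 =>
          rw [TensorProduct.tmul_add, TensorProduct.tmul_add]
          exact ha _ _ h1 h2
      | tmul c d => exact ht a b c d

/-- induction principle for 3-fold pure tensors. -/
theorem t3_ind {P : T3 K H → Prop} (hz : P 0)
    (ht : ∀ a b c : H, P (a ⊗ₜ (b ⊗ₜ c)))
    (ha : ∀ x y, P x → P y → P (x + y)) : ∀ x, P x := by
  intro x
  induction x using TensorProduct.induction_on with
  | zero => exact hz
  | add x y hx hy => exact ha x y hx hy
  | tmul a m =>
    induction m using TensorProduct.induction_on with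
    | zero => simpa using hz
    | add m1 m2 h1 h2 => rw [TensorProduct.tmul_add]; exact ha _ _ h1 h2
    | tmul b c => exact ht a b c

theorem m4assoc (A B C : T4 K H) : A * B * C = A * (B * C) := mul_assoc A B C
theorem m4addl (A B C : T4 K H) : (A + B) * C = A * C + B * C := Distrib.right_distrib A B C
theorem m4addr (A B C : T4 K H) : A * (B + C) = A * B + A * C := Distrib.left_distrib A B C
theorem m4zerol (C : T4 K H) : 0 * C = 0 := zero_mul C
theorem m4zeror (C : T4 K H) : C * 0 = 0 := mul_zero C
theorem m4onel (C : T4 K H) : 1 * C = C := one_mul C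
theorem m4oner (C : T4 K H) : C * 1 = C := mul_one C

/-- `(T2 ⊗ T2) ≃ₐ T4`. -/
def XiA : ((T2 K H) ⊗[K] (T2 K H)) ≃ₐ[K] T4 K H :=
  Algebra.TensorProduct.assoc K K K H H (H ⊗[K] H)

def g12a : T2 K H →ₐ[K] T4 K H :=
  (XiA : ((T2 K H) ⊗[K] (T2 K H)) ≃ₐ[K] T4 K H).toAlgHom.comp
    (Algebra.TensorProduct.includeLeft : T2 K H →ₐ[K] (T2 K H) ⊗[K] (T2 K H))

def g34a : T2 K H →ₐ[K] T4 K H :=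
  (XiA : ((T2 K H) ⊗[K] (T2 K H)) ≃ₐ[K] T4 K H).toAlgHom.comp
    (Algebra.TensorProduct.includeRight : T2 K H →ₐ[K] (T2 K H) ⊗[K] (T2 K H))

def j12a : T2 K H →ₐ[K] T3 K H :=
  Algebra.TensorProduct.map (AlgHom.id K H)
    (Algebra.TensorProduct.includeLeft : H →ₐ[K] T2 K H)

def j23a : T2 K H →ₐ[K] T3 K H := Algebra.TensorProduct.includeRight

def j234a : T3 K H →ₐ[K] T4 K H := Algebra.TensorProduct.includeRight

def j123a : T3 K H →ₐ[K] T4 K H :=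
  Algebra.TensorProduct.map (AlgHom.id K H)
    (Algebra.TensorProduct.map (AlgHom.id K H)
      (Algebra.TensorProduct.includeLeft : H →ₐ[K] T2 K H))

def kapa : H →ₐ[K] T4 K H :=
  j234a.comp (j23a.comp (Algebra.TensorProduct.includeRight : H →ₐ[K] T2 K H))

variable (qb : QuasiBialgebra K H)

def DLa : T2 K H →ₐ[K] T3 K H :=
  (Algebra.TensorProduct.assoc K K K H H H).toAlgHom.comp
    (Algebra.TensorProduct.map qb.Δ (AlgHom.id K H))

def DRa : T2 K H →ₐ[K] T3 K H := Algebra.TensorProduct.map (AlgHom.id K H) qb.Δ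

def d12a : T3 K H →ₐ[K] T4 K H :=
  (XiA : ((T2 K H) ⊗[K] (T2 K H)) ≃ₐ[K] T4 K H).toAlgHom.comp
    (Algebra.TensorProduct.map qb.Δ (AlgHom.id K (T2 K H)))

def d23a : T3 K H →ₐ[K] T4 K H :=
  Algebra.TensorProduct.map (AlgHom.id K H) (DLa qb)

def dda : T2 K H →ₐ[K] T4 K H :=
  (XiA : ((T2 K H) ⊗[K] (T2 K H)) ≃ₐ[K] T4 K H).toAlgHom.comp
    (Algebra.TensorProduct.map qb.Δ qb.Δ)

def eRa : T2 K H →ₐ[K] H :=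
  (Algebra.TensorProduct.rid K K H).toAlgHom.comp
    (Algebra.TensorProduct.map (AlgHom.id K H) qb.ε)

/-- the twisted coproduct as an algebra hom. -/
def DGa (G : (T2 K H)ˣ) : H →ₐ[K] T2 K H where
  toFun a := ↑G * qb.Δ a * ↑G⁻¹
  map_one' := by simp [Units.mul_inv]
  map_mul' x y := by
    simp only [map_mul]
    conv_lhs => rw [show qb.Δ x * qb.Δ y
      = qb.Δ x * (((G⁻¹ : (T2 K H)ˣ) : T2 K H) * ↑G) * qb.Δ y by
        rw [Units.inv_mul, mul_one]]
    simp [mul_assoc]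
  map_zero' := by simp
  map_add' x y := by simp [mul_add, add_mul]
  commutes' r := by
    simp [Algebra.algebraMap_eq_smul_one, mul_smul_comm, smul_mul_assoc, Units.mul_inv]

def d12Ga (G : (T2 K H)ˣ) : T3 K H →ₐ[K] T4 K H :=
  (XiA : ((T2 K H) ⊗[K] (T2 K H)) ≃ₐ[K] T4 K H).toAlgHom.comp
    (Algebra.TensorProduct.map (DGa qb G) (AlgHom.id K (T2 K H)))

@[simp] theorem gammaBarMap_tmul (S : H →ₗ[K] H) (t a b c d : H) :
    gammaBarMap K H S t (a ⊗ₜ[K] (b ⊗ₜ[K] (c ⊗ₜ[K] d))) = (a * t * S d) ⊗ₜ[K] (b * t * S c) := by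
  simp [gammaBarMap, mulMid, mul2, mul_assoc]

@[simp] theorem gBeta_tmul (S : H →ₗ[K] H) (t a b : H) :
    gBeta K H S t (a ⊗ₜ[K] b) = a * (t * S b) := by
  simp [gBeta, mul2]

@[simp] theorem eR_tmul (f : H →ₗ[K] K) (a b : H) :
    eR K H f (a ⊗ₜ[K] b) = f b • a := by
  simp [eR]

theorem XiA_lin (z : (T2 K H) ⊗[K] (T2 K H)) :
    (XiA : ((T2 K H) ⊗[K] (T2 K H)) ≃ₐ[K] T4 K H) z
      = TensorProduct.assoc K H H (H ⊗[K] H) z := rfl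

@[simp] theorem XiA_tmul (a b : H) (m : T2 K H) :
    (XiA : ((T2 K H) ⊗[K] (T2 K H)) ≃ₐ[K] T4 K H) ((a ⊗ₜ b) ⊗ₜ m) = a ⊗ₜ (b ⊗ₜ m) := rfl

theorem g12a_eq (x : T2 K H) :
    g12a x = (XiA : ((T2 K H) ⊗[K] (T2 K H)) ≃ₐ[K] T4 K H) (x ⊗ₜ (1 : T2 K H)) := rfl

theorem g34a_eq (x : T2 K H) :
    g34a x = (XiA : ((T2 K H) ⊗[K] (T2 K H)) ≃ₐ[K] T4 K H) ((1 : T2 K H) ⊗ₜ x) := rfl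

@[simp] theorem g12a_tmul (x y : H) :
    g12a (x ⊗ₜ y) = x ⊗ₜ (y ⊗ₜ (1 : T2 K H)) := rfl

@[simp] theorem g34a_app (x : T2 K H) :
    g34a x = (1 : H) ⊗ₜ ((1 : H) ⊗ₜ x) := by
  rw [g34a_eq, Algebra.TensorProduct.one_def]; rfl

@[simp] theorem j12a_tmul (x y : H) : j12a (x ⊗ₜ[K] y) = x ⊗ₜ[K] (y ⊗ₜ[K] (1 : H)) := rfl

@[simp] theorem j23a_app (x : T2 K H) : j23a x = (1 : H) ⊗ₜ x := rfl

@[simp] theorem j234a_app (ξ : T3 K H) : j234a ξ = (1 : H) ⊗ₜ ξ := rfl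

@[simp] theorem j123a_tmul (a b c : H) :
    j123a (a ⊗ₜ[K] (b ⊗ₜ[K] c)) = a ⊗ₜ[K] (b ⊗ₜ[K] (c ⊗ₜ[K] (1 : H))) := rfl

theorem j123a_mid (a : H) (m : T2 K H) :
    j123a (a ⊗ₜ m) = a ⊗ₜ ((Algebra.TensorProduct.map (AlgHom.id K H)
      (Algebra.TensorProduct.includeLeft : H →ₐ[K] T2 K H)) m) := rfl

@[simp] theorem kapa_app (w : H) :
    kapa w = (1 : H) ⊗ₜ[K] ((1 : H) ⊗ₜ[K] ((1 : H) ⊗ₜ[K] w)) := rfl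

theorem DLa_tmul (a b : H) :
    DLa qb (a ⊗ₜ b) = TensorProduct.assoc K H H H (qb.Δ a ⊗ₜ b) := rfl

theorem DRa_tmul (a b : H) : DRa qb (a ⊗ₜ b) = a ⊗ₜ qb.Δ b := rfl

theorem d12a_tmul (a : H) (m : T2 K H) :
    d12a qb (a ⊗ₜ m) = (XiA : ((T2 K H) ⊗[K] (T2 K H)) ≃ₐ[K] T4 K H) (qb.Δ a ⊗ₜ m) := rfl

theorem d23a_tmul (a : H) (m : T2 K H) : d23a qb (a ⊗ₜ m) = a ⊗ₜ DLa qb m := rfl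

theorem dda_tmul (a b : H) :
    dda qb (a ⊗ₜ b)
      = (XiA : ((T2 K H) ⊗[K] (T2 K H)) ≃ₐ[K] T4 K H) (qb.Δ a ⊗ₜ qb.Δ b) := rfl

theorem eRa_tmul (a b : H) : eRa qb (a ⊗ₜ b) = qb.ε b • a := rfl

theorem DGa_app (G : (T2 K H)ˣ) (a : H) :
    DGa qb G a = ↑G * qb.Δ a * ↑G⁻¹ := rfl

theorem d12Ga_tmul (G : (T2 K H)ˣ) (a : H) (m : T2 K H) :
    d12Ga qb G (a ⊗ₜ m)
      = (XiA : ((T2 K H) ⊗[K] (T2 K H)) ≃ₐ[K] T4 K H) ((↑G * qb.Δ a * ↑G⁻¹) ⊗ₜ m) := rfl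

/-! agreement of the linear-map structure maps with the algebra-hom versions -/

theorem L_DL (x : T2 K H) : DL K H qb.Δ.toLinearMap x = DLa qb x := rfl

theorem L_DR (x : T2 K H) : DR K H qb.Δ.toLinearMap x = DRa qb x := rfl

theorem L_j12 (x : T2 K H) : j12 K H x = j12a x := rfl

theorem L_j23 (x : T2 K H) : j23 K H x = j23a x := rfl

theorem L_j234 (ξ : T3 K H) : j234 K H ξ = j234a ξ := rfl

theorem L_j123 (ξ : T3 K H) : j123 K H ξ = j123a ξ := rfl

theorem L_d12 (ξ : T3 K H) : d12 K H qb.Δ.toLinearMap ξ = d12a qb ξ := rfl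

theorem L_d23 (ξ : T3 K H) : d23 K H qb.Δ.toLinearMap ξ = d23a qb ξ := rfl

theorem L_eR (x : T2 K H) : eR K H qb.ε.toLinearMap x = eRa qb x := by
  induction x using TensorProduct.induction_on with
  | zero => rw [map_zero, map_zero]
  | add x y hx hy => rw [map_add, map_add, hx, hy]
  | tmul a b => rw [eR_tmul, eRa_tmul]; rfl

theorem twistDelta_app (G : (T2 K H)ˣ) (a : H) :
    twistDelta K H qb.Δ.toLinearMap G a = DGa qb G a := by
  simp only [twistDelta, LinearMap.coe_comp, Function.comp_apply, LinearMap.mulLeft_apply,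
    LinearMap.mulRight_apply, DGa_app, mul_assoc]; rfl

theorem L_d12G (G : (T2 K H)ˣ) (ξ : T3 K H) :
    d12 K H (twistDelta K H qb.Δ.toLinearMap G) ξ = d12Ga qb G ξ := by
  induction ξ using TensorProduct.induction_on with
  | zero =>
      rw [map_zero (d12 K H (twistDelta K H qb.Δ.toLinearMap G)), map_zero (d12Ga qb G)]
  | add x y hx hy =>
      rw [map_add (d12 K H (twistDelta K H qb.Δ.toLinearMap G)),
        map_add (d12Ga qb G), hx, hy]
  | tmul a m =>
    simp only [d12, LinearMap.coe_comp, Function.comp_apply, TensorProduct.map_tmul,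
      LinearMap.id_coe, id_eq, twistDelta_app, d12Ga_tmul, DGa_app, XiA_lin,
      LinearEquiv.coe_coe]

/-! composition identities between the algebra-hom structure maps -/

variable {qb₀ : QuasiBialgebra K H}

theorem E1 (x : T2 K H) : d12a qb (j23a x) = g34a x := by
  rw [j23a_app, d12a_tmul, map_one, g34a_app, Algebra.TensorProduct.one_def]; rfl

theorem E2 (x : T2 K H) : d12a qb (DRa qb x) = dda qb x := by
  induction x using TensorProduct.induction_on with
  | zero => rw [map_zero, map_zero, map_zero]
  | add x y hx hy => rw [map_add, map_add, map_add, hx, hy]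
  | tmul a b => rw [DRa_tmul, d12a_tmul, dda_tmul]

theorem E4 (x : T2 K H) : d12a qb (j12a x) = j123a (DLa qb x) := by
  induction x using TensorProduct.induction_on with
  | zero => simp
  | add x y hx hy => simp [hx, hy]
  | tmul a b =>
    rw [j12a_tmul, d12a_tmul, DLa_tmul]
    generalize qb.Δ a = y
    induction y using TensorProduct.induction_on with
    | zero => simp
    | add y1 y2 h1 h2 => simp [TensorProduct.add_tmul, h1, h2]
    | tmul p q => simp [TensorProduct.assoc_tmul]

theorem E6 (x : T2 K H) : j123a (j12a x) = g12a x := by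
  induction x using TensorProduct.induction_on with
  | zero => simp
  | add x y hx hy => simp [hx, hy]
  | tmul a b =>
    rw [j12a_tmul, j123a_tmul, g12a_tmul, Algebra.TensorProduct.one_def]

theorem E7 (x : T2 K H) : j123a (DRa qb x) = d23a qb (j12a x) := by
  induction x using TensorProduct.induction_on with
  | zero => simp
  | add x y hx hy => simp [hx, hy]
  | tmul a b =>
    rw [DRa_tmul, j123a_mid, j12a_tmul, d23a_tmul, DLa_tmul]
    generalize qb.Δ b = z
    induction z using TensorProduct.induction_on with
    | zero => simp
    | add z1 z2 h1 h2 => simp [TensorProduct.add_tmul, TensorProduct.tmul_add, h1, h2]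
    | tmul u v => simp [TensorProduct.assoc_tmul]

theorem E8 (x : T2 K H) : j123a (j23a x) = j234a (j12a x) := rfl

theorem E3pre1 (qb : QuasiBialgebra K H) (a a' : H) :
    d12a qb (DLa qb (a ⊗ₜ[K] a')) = j123a (DLa qb (qb.Δ a)) * kapa a' := by
  rw [DLa_tmul]
  generalize qb.Δ a = y
  induction y using TensorProduct.induction_on with
  | zero => simp only [TensorProduct.zero_tmul, map_zero, m4zerol]
  | add y1 y2 h1 h2 => simp only [TensorProduct.add_tmul, map_add, m4addl, h1, h2]
  | tmul p q =>
    rw [TensorProduct.assoc_tmul, d12a_tmul, DLa_tmul]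
    generalize qb.Δ p = z
    induction z using TensorProduct.induction_on with
    | zero => simp only [TensorProduct.zero_tmul, map_zero, m4zerol]
    | add z1 z2 h1 h2 => simp only [TensorProduct.add_tmul, map_add, m4addl, h1, h2]
    | tmul u v => simp [Algebra.TensorProduct.tmul_mul_tmul, TensorProduct.assoc_tmul]

theorem E3pre2 (qb : QuasiBialgebra K H) (a a' : H) :
    d23a qb (DLa qb (a ⊗ₜ[K] a')) = j123a (DRa qb (qb.Δ a)) * kapa a' := by
  rw [DLa_tmul]
  generalize qb.Δ a = y
  induction y using TensorProduct.induction_on with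
  | zero => simp only [TensorProduct.zero_tmul, map_zero, m4zerol]
  | add y1 y2 h1 h2 => simp only [TensorProduct.add_tmul, map_add, m4addl, h1, h2]
  | tmul p q =>
    rw [TensorProduct.assoc_tmul, d23a_tmul, DLa_tmul, DRa_tmul, j123a_mid]
    generalize qb.Δ q = z
    induction z using TensorProduct.induction_on with
    | zero => simp only [TensorProduct.zero_tmul, TensorProduct.tmul_zero, map_zero, m4zerol]
    | add z1 z2 h1 h2 =>
        simp only [TensorProduct.add_tmul, TensorProduct.tmul_add, map_add, m4addl, h1, h2]
    | tmul u v => simp [Algebra.TensorProduct.tmul_mul_tmul, TensorProduct.assoc_tmul]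

theorem E3pre3 (ξ : T3 K H) (w : H) : j123a ξ * kapa w = kapa w * j123a ξ := by
  induction ξ using t3_ind with
  | hz => simp only [map_zero, m4zerol, m4zeror]
  | ht a b c => simp [Algebra.TensorProduct.tmul_mul_tmul]
  | ha x y hx hy => simp only [map_add, m4addl, m4addr, hx, hy]

theorem qcA (qb : QuasiBialgebra K H) (a : H) :
    DLa qb (qb.Δ a) * (qb.Φ : T3 K H) = (qb.Φ : T3 K H) * DRa qb (qb.Δ a) := by
  have hq := qb.quasiCoassoc a
  rw [L_DL, L_DR] at hq
  exact hq.symm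

theorem E3 (qb : QuasiBialgebra K H) (x : T2 K H) :
    d12a qb (DLa qb x) * j123a (qb.Φ : T3 K H)
      = j123a (qb.Φ : T3 K H) * d23a qb (DLa qb x) := by
  induction x using TensorProduct.induction_on with
  | zero => simp only [map_zero, m4zerol, m4zeror]
  | add x y hx hy => simp only [map_add, m4addl, m4addr, hx, hy]
  | tmul a a' =>
    rw [E3pre1, m4assoc, ← E3pre3, ← m4assoc, ← map_mul, qcA, map_mul, m4assoc,
      ← E3pre2]

theorem E9 (qb : QuasiBialgebra K H) (G : (T2 K H)ˣ) (ξ : T3 K H) :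
    d12Ga qb G ξ
      = g12a ((G : T2 K H)) * d12a qb ξ * g12a ((G⁻¹ : (T2 K H)ˣ) : T2 K H) := by
  induction ξ using TensorProduct.induction_on with
  | zero => simp only [map_zero, m4zerol, m4zeror]
  | add x y hx hy => simp only [map_add, m4addl, m4addr, hx, hy]
  | tmul a m =>
    rw [d12Ga_tmul, d12a_tmul, g12a_eq, g12a_eq, ← map_mul, ← map_mul]
    congr 1
    simp [Algebra.TensorProduct.tmul_mul_tmul]

variable {S : H →ₗ[K] H} {α β : H}

theorem master {qb : QuasiBialgebra K H} (h : IsQuasiAntipode K H qb S α β)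
    (V N : T4 K H) :
    gammaBarMap K H S 1 (V * N)
      = gammaBarMap K H S 1 (V * g12a (gammaBarMap K H S 1 N)) := by
  induction V using t4_ind with
  | hz => simp only [m4zerol, map_zero]
  | ha x y hx hy => simp only [m4addl, map_add, hx, hy]
  | ht a b c d =>
    induction N using t4_ind with
    | hz => simp only [map_zero, m4zeror]
    | ha x y hx hy => simp only [m4addr, map_add, hx, hy]
    | ht a' b' c' d' =>
      simp [Algebra.TensorProduct.tmul_mul_tmul, h.anti_mul, h.map_one, mul_assoc]

theorem absorbA {qb : QuasiBialgebra K H} (h : IsQuasiAntipode K H qb S α β) (t : H)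
    (V : T4 K H) :
    gammaBarMap K H S t V = gammaBarMap K H S 1 (V * g12a (t ⊗ₜ[K] t)) := by
  induction V using t4_ind with
  | hz => simp only [map_zero, m4zerol]
  | ha x y hx hy => simp only [map_add, m4addl, hx, hy]
  | ht a b c d => simp [Algebra.TensorProduct.tmul_mul_tmul]

theorem gBeta_delta {qb : QuasiBialgebra K H} (h : IsQuasiAntipode K H qb S α β) (a : H) :
    gBeta K H S β (qb.Δ a) = qb.ε a • β := by
  rw [← h.antibeta a]
  generalize qb.Δ a = y
  induction y using TensorProduct.induction_on with
  | zero => simp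
  | add x y hx hy => simp only [map_add, add_mul, hx, hy]
  | tmul p q => simp [mul2, Algebra.TensorProduct.tmul_mul_tmul, mul_assoc]

theorem gBeta_one {qb : QuasiBialgebra K H} (h : IsQuasiAntipode K H qb S α β) (t : H) :
    gBeta K H S t (1 : T2 K H) = t := by
  rw [Algebra.TensorProduct.one_def]; simp [h.map_one]

theorem gBeta_add (t1 t2 : H) (x : T2 K H) :
    gBeta K H S (t1 + t2) x = gBeta K H S t1 x + gBeta K H S t2 x := by
  induction x using TensorProduct.induction_on with
  | zero => simp
  | add x y hx hy => simp only [map_add, hx, hy]; abel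
  | tmul p q => simp [mul_add, add_mul]

theorem GB {qb : QuasiBialgebra K H} (h : IsQuasiAntipode K H qb S α β)
    (x y : T2 K H) :
    gBeta K H S (mul2 K H (TensorProduct.map LinearMap.id S y * (β ⊗ₜ[K] (1:H)))) x
      = gBeta K H S β (x * y) := by
  induction x using TensorProduct.induction_on with
  | zero => simp
  | add x1 x2 h1 h2 => simp only [map_add, add_mul, h1, h2]
  | tmul p q =>
    induction y using TensorProduct.induction_on with
    | zero => simp [mul2]
    | add y1 y2 h1 h2 =>
        simp only [map_add, add_mul, mul_add, gBeta_add, h1, h2]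
    | tmul g g' => simp [mul2, Algebra.TensorProduct.tmul_mul_tmul, h.anti_mul, mul_assoc]

theorem GBtw {qb : QuasiBialgebra K H} (h : IsQuasiAntipode K H qb S α β)
    (G : (T2 K H)ˣ) (x : T2 K H) :
    gBeta K H S (twistBeta K H S β G) x = gBeta K H S β (x * (G : T2 K H)) :=
  GB h x ((G : T2 K H))

theorem S1 {qb : QuasiBialgebra K H} (h : IsQuasiAntipode K H qb S α β)
    (t1 t2 : H) (x : T2 K H) :
    gammaBarMap K H S 1 (j234a (j12a x) * g12a (t1 ⊗ₜ[K] t2))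
      = t1 ⊗ₜ[K] gBeta K H S t2 x := by
  induction x using TensorProduct.induction_on with
  | zero => simp only [map_zero, m4zerol, TensorProduct.tmul_zero]
  | add a b ha hb => simp only [map_add, m4addl, TensorProduct.tmul_add, ha, hb]
  | tmul c c' => simp [Algebra.TensorProduct.tmul_mul_tmul, h.map_one, mul_assoc]

theorem S2core {qb : QuasiBialgebra K H} (h : IsQuasiAntipode K H qb S α β)
    (p t1 t2 : H) (y : T2 K H) :
    gammaBarMap K H S 1
        ((p ⊗ₜ[K] (TensorProduct.assoc K H H H (y ⊗ₜ[K] (1:H)))) * g12a (t1 ⊗ₜ[K] t2))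
      = (p * t1) ⊗ₜ[K] gBeta K H S t2 y := by
  induction y using TensorProduct.induction_on with
  | zero =>
      simp only [TensorProduct.zero_tmul, map_zero, TensorProduct.tmul_zero, m4zerol]
  | add y1 y2 h1 h2 =>
      simp only [TensorProduct.add_tmul, TensorProduct.tmul_add, map_add, m4addl, h1, h2]
  | tmul u v =>
      simp [Algebra.TensorProduct.tmul_mul_tmul, TensorProduct.assoc_tmul, h.map_one,
        mul_assoc]

theorem S2 {qb : QuasiBialgebra K H} (h : IsQuasiAntipode K H qb S α β)
    (t1 : H) (x : T2 K H) :
    gammaBarMap K H S 1 (d23a qb (j12a x) * g12a (t1 ⊗ₜ[K] β))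
      = (eR K H qb.ε.toLinearMap x * t1) ⊗ₜ[K] β := by
  induction x using TensorProduct.induction_on with
  | zero => simp only [map_zero, m4zerol, zero_mul, TensorProduct.zero_tmul]
  | add a b ha hb =>
      simp only [map_add, m4addl, add_mul, TensorProduct.add_tmul, ha, hb]
  | tmul p q =>
    rw [j12a_tmul, d23a_tmul, DLa_tmul, S2core h p t1 β (qb.Δ q), gBeta_delta h]
    simp [TensorProduct.tmul_smul, TensorProduct.smul_tmul', smul_mul_assoc]

theorem S3core2 {qb : QuasiBialgebra K H} (h : IsQuasiAntipode K H qb S α β)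
    (u a' t1 t2 : H) (z : T2 K H) :
    gammaBarMap K H S 1
        ((u ⊗ₜ[K] (TensorProduct.assoc K H H H (z ⊗ₜ[K] a'))) * g12a (t1 ⊗ₜ[K] t2))
      = (u * t1 * S a') ⊗ₜ[K] gBeta K H S t2 z := by
  induction z using TensorProduct.induction_on with
  | zero =>
      simp only [TensorProduct.zero_tmul, map_zero, TensorProduct.tmul_zero, m4zerol]
  | add z1 z2 h1 h2 =>
      simp only [TensorProduct.add_tmul, TensorProduct.tmul_add, map_add, m4addl, h1, h2]
  | tmul w w' =>
      simp [Algebra.TensorProduct.tmul_mul_tmul, TensorProduct.assoc_tmul, mul_assoc]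

theorem S3core {qb : QuasiBialgebra K H} (h : IsQuasiAntipode K H qb S α β)
    (a' t1 : H) (y : T2 K H) :
    gammaBarMap K H S 1
        (d23a qb (TensorProduct.assoc K H H H (y ⊗ₜ[K] a')) * g12a (t1 ⊗ₜ[K] β))
      = (eR K H qb.ε.toLinearMap y * t1 * S a') ⊗ₜ[K] β := by
  induction y using TensorProduct.induction_on with
  | zero =>
      simp only [TensorProduct.zero_tmul, map_zero, m4zerol, zero_mul,
        TensorProduct.zero_tmul]
  | add y1 y2 h1 h2 =>
      simp only [TensorProduct.add_tmul, map_add, m4addl, add_mul, h1, h2]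
  | tmul u v =>
    rw [TensorProduct.assoc_tmul, d23a_tmul, DLa_tmul, S3core2 h u a' t1 β (qb.Δ v),
      gBeta_delta h]
    simp [TensorProduct.tmul_smul, TensorProduct.smul_tmul', smul_mul_assoc]

theorem S3 {qb : QuasiBialgebra K H} (h : IsQuasiAntipode K H qb S α β)
    (t1 : H) (x : T2 K H) :
    gammaBarMap K H S 1 (d23a qb (DLa qb x) * g12a (t1 ⊗ₜ[K] β))
      = gBeta K H S t1 x ⊗ₜ[K] β := by
  induction x using TensorProduct.induction_on with
  | zero => simp only [map_zero, m4zerol, TensorProduct.zero_tmul]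
  | add a b ha hb =>
      simp only [map_add, m4addl, TensorProduct.add_tmul, ha, hb]
  | tmul a a' =>
    rw [DLa_tmul, S3core h a' t1 (qb.Δ a), qb.counit_right a]
    simp [mul_assoc]

theorem eRGinv {qb : QuasiBialgebra K H} (G : (T2 K H)ˣ) (hG : IsTwist K H qb G) :
    eR K H qb.ε.toLinearMap ((G⁻¹ : (T2 K H)ˣ) : T2 K H) = 1 := by
  have h1 : eRa qb (G : T2 K H) = 1 := by rw [← L_eR]; exact hG.eps_right
  rw [L_eR]
  calc eRa qb ((G⁻¹ : (T2 K H)ˣ) : T2 K H)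
      = eRa qb ((G⁻¹ : (T2 K H)ˣ) : T2 K H) * eRa qb (G : T2 K H) := by rw [h1, mul_one]
    _ = eRa qb (((G⁻¹ : (T2 K H)ˣ) : T2 K H) * (G : T2 K H)) := (map_mul _ _ _).symm
    _ = 1 := by rw [Units.inv_mul, map_one]

theorem commMul (u v : T2 K H) :
    TensorProduct.comm K H H (u * v)
      = TensorProduct.comm K H H u * TensorProduct.comm K H H v :=
  map_mul (Algebra.TensorProduct.comm K H H) u v


theorem t22mul (p q r s : T2 K H) : (p ⊗ₜ[K] q) * (r ⊗ₜ[K] s) = (p * r) ⊗ₜ[K] (q * s) :=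
  Algebra.TensorProduct.tmul_mul_tmul p r q s

theorem Fl (S : H →ₗ[K] H) (U : (T2 K H) ⊗[K] (T2 K H)) :
    gammaBarMap K H S 1 ((XiA : ((T2 K H) ⊗[K] (T2 K H)) ≃ₐ[K] T4 K H) U)
      = LinearMap.mul' K (T2 K H)
          (TensorProduct.map LinearMap.id
            (TensorProduct.map S S ∘ₗ (TensorProduct.comm K H H).toLinearMap) U) := by
  induction U using TensorProduct.induction_on with
  | zero => simp
  | add a b ha hb => simp only [map_add, ha, hb]
  | tmul p q =>
    induction p using TensorProduct.induction_on with
    | zero => simp only [TensorProduct.zero_tmul, map_zero]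
    | add a b ha hb => simp only [TensorProduct.add_tmul, map_add, ha, hb]
    | tmul x y =>
      induction q using TensorProduct.induction_on with
      | zero => simp only [TensorProduct.tmul_zero, map_zero]
      | add a b ha hb => simp only [TensorProduct.tmul_add, map_add, ha, hb]
      | tmul z w =>
        simp [LinearMap.mul'_apply, Algebra.TensorProduct.tmul_mul_tmul]

theorem R1 {qb : QuasiBialgebra K H} (S : H →ₗ[K] H) (G : (T2 K H)ˣ)
    (δel : T2 K H) (x : T2 K H) :
    TensorProduct.map
      (LinearMap.mulLeft K (G : T2 K H) ∘ₗ LinearMap.mulRight K δel ∘ₗ qb.Δ.toLinearMap)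
      (TensorProduct.map S S ∘ₗ
        LinearMap.mulLeft K ((TensorProduct.comm K H H) (G : T2 K H)) ∘ₗ
        (TensorProduct.comm K H H).toLinearMap ∘ₗ qb.Δ.toLinearMap) x
    = TensorProduct.map LinearMap.id
        (TensorProduct.map S S ∘ₗ (TensorProduct.comm K H H).toLinearMap)
        (TensorProduct.map
          (LinearMap.mulLeft K (G : T2 K H) ∘ₗ LinearMap.mulRight K δel ∘ₗ qb.Δ.toLinearMap)
          (LinearMap.mulLeft K (G : T2 K H) ∘ₗ qb.Δ.toLinearMap) x) := by
  induction x using TensorProduct.induction_on with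
  | zero => simp
  | add a b ha hb => simp only [map_add, ha, hb]
  | tmul a b =>
    simp only [TensorProduct.map_tmul, LinearMap.coe_comp, Function.comp_apply,
      LinearMap.mulLeft_apply, LinearMap.mulRight_apply, LinearMap.id_coe, id_eq,
      LinearEquiv.coe_coe]
    rw [commMul]

theorem C5lem {qb : QuasiBialgebra K H} (G : (T2 K H)ˣ) (δel : T2 K H) (x : T2 K H) :
    (XiA : ((T2 K H) ⊗[K] (T2 K H)) ≃ₐ[K] T4 K H)
      (TensorProduct.map
        (LinearMap.mulLeft K (G : T2 K H) ∘ₗ LinearMap.mulRight K δel ∘ₗ qb.Δ.toLinearMap)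
        (LinearMap.mulLeft K (G : T2 K H) ∘ₗ qb.Δ.toLinearMap) x)
      = g12a (G : T2 K H) * g34a (G : T2 K H) * dda qb x * g12a δel := by
  induction x using TensorProduct.induction_on with
  | zero => simp only [map_zero, m4zeror, m4zerol]
  | add x y hx hy => simp only [map_add, m4addr, m4addl, hx, hy]
  | tmul a b =>
    simp only [TensorProduct.map_tmul, LinearMap.coe_comp, Function.comp_apply,
      LinearMap.mulLeft_apply, LinearMap.mulRight_apply, AlgHom.toLinearMap_apply]
    rw [g12a_eq, g34a_eq, dda_tmul, g12a_eq, ← map_mul, ← map_mul, ← map_mul]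
    congr 1
    simp [t22mul, mul_assoc]

theorem rhslemma {qb : QuasiBialgebra K H} (S : H →ₗ[K] H) (G : (T2 K H)ˣ)
    (δel : T2 K H) :
    LinearMap.mul' K (T2 K H)
      (TensorProduct.map
        (LinearMap.mulLeft K (G : T2 K H) ∘ₗ LinearMap.mulRight K δel ∘ₗ qb.Δ.toLinearMap)
        (TensorProduct.map S S ∘ₗ
          LinearMap.mulLeft K ((TensorProduct.comm K H H) (G : T2 K H)) ∘ₗ
          (TensorProduct.comm K H H).toLinearMap ∘ₗ qb.Δ.toLinearMap)
        (G : T2 K H))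
    = gammaBarMap K H S 1
        (g12a (G : T2 K H) * (g34a (G : T2 K H) * (dda qb (G : T2 K H) * g12a δel))) := by
  rw [R1, ← Fl, C5lem]
  simp only [m4assoc]

theorem keylemma {qb : QuasiBialgebra K H} (h : IsQuasiAntipode K H qb S α β)
    (G : (T2 K H)ˣ) (hG : IsTwist K H qb G) :
    gammaBarMap K H S 1
      (g12a (G : T2 K H) * (g34a (G : T2 K H) * (dda qb (G : T2 K H) *
        (d12a qb ((qb.Φ⁻¹ : (T3 K H)ˣ) : T3 K H) * (j123a (qb.Φ : T3 K H) *
          (d23a qb (DLa qb ((G⁻¹ : (T2 K H)ˣ) : T2 K H)) *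
            (d23a qb (j12a ((G⁻¹ : (T2 K H)ˣ) : T2 K H)) *
              (j234a (j12a ((G⁻¹ : (T2 K H)ˣ) : T2 K H)) *
                g12a (twistBeta K H S β G ⊗ₜ[K] twistBeta K H S β G)))))))))
    = gammaBarMap K H S 1
        (g12a (G : T2 K H) * (g34a (G : T2 K H) * (dda qb (G : T2 K H) *
          g12a (gammaBarEl K H qb.Δ.toLinearMap (qb.Φ : T3 K H)
            ((qb.Φ⁻¹ : (T3 K H)ˣ) : T3 K H) S β)))) := by
  have e1 : gammaBarMap K H S 1 (j234a (j12a ((G⁻¹ : (T2 K H)ˣ) : T2 K H)) *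
        g12a (twistBeta K H S β G ⊗ₜ[K] twistBeta K H S β G))
      = twistBeta K H S β G ⊗ₜ[K] β := by
    rw [S1 h (twistBeta K H S β G) (twistBeta K H S β G) _, GBtw h, Units.inv_mul,
      gBeta_one h]
  have e2 : gammaBarMap K H S 1 (d23a qb (j12a ((G⁻¹ : (T2 K H)ˣ) : T2 K H)) *
        g12a (twistBeta K H S β G ⊗ₜ[K] β))
      = twistBeta K H S β G ⊗ₜ[K] β := by
    rw [S2 h (twistBeta K H S β G) _, eRGinv G hG, one_mul]
  have e3 : gammaBarMap K H S 1 (d23a qb (DLa qb ((G⁻¹ : (T2 K H)ˣ) : T2 K H)) *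
        g12a (twistBeta K H S β G ⊗ₜ[K] β))
      = β ⊗ₜ[K] β := by
    rw [S3 h (twistBeta K H S β G) _, GBtw h, Units.inv_mul, gBeta_one h]
  have hd : gammaBarMap K H S 1
        ((d12a qb ((qb.Φ⁻¹ : (T3 K H)ˣ) : T3 K H) * j123a (qb.Φ : T3 K H)) *
          g12a (β ⊗ₜ[K] β))
      = gammaBarEl K H qb.Δ.toLinearMap (qb.Φ : T3 K H)
          ((qb.Φ⁻¹ : (T3 K H)ˣ) : T3 K H) S β := by
    rw [← absorbA h β]
    rfl
  set A1 := g12a (G : T2 K H) with hA1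
  set A2 := g34a (G : T2 K H) with hA2
  set A3 := dda qb (G : T2 K H) with hA3
  set A4 := d12a qb ((qb.Φ⁻¹ : (T3 K H)ˣ) : T3 K H) with hA4
  set A5 := j123a (qb.Φ : T3 K H) with hA5
  set B1 := d23a qb (DLa qb ((G⁻¹ : (T2 K H)ˣ) : T2 K H)) with hB1
  set B2 := d23a qb (j12a ((G⁻¹ : (T2 K H)ˣ) : T2 K H)) with hB2
  set B3 := j234a (j12a ((G⁻¹ : (T2 K H)ˣ) : T2 K H)) with hB3
  set J0 := g12a (twistBeta K H S β G ⊗ₜ[K] twistBeta K H S β G) with hJ0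
  set J1 := g12a (twistBeta K H S β G ⊗ₜ[K] β) with hJ1
  set J2 := g12a ((β : H) ⊗ₜ[K] β) with hJ2
  set De := gammaBarEl K H qb.Δ.toLinearMap (qb.Φ : T3 K H)
      ((qb.Φ⁻¹ : (T3 K H)ˣ) : T3 K H) S β with hDe
  calc gammaBarMap K H S 1 (A1 * (A2 * (A3 * (A4 * (A5 * (B1 * (B2 * (B3 * J0))))))))
      = gammaBarMap K H S 1
          ((A1 * (A2 * (A3 * (A4 * (A5 * (B1 * B2)))))) * (B3 * J0)) := by
        simp only [m4assoc]
    _ = gammaBarMap K H S 1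
          ((A1 * (A2 * (A3 * (A4 * (A5 * (B1 * B2)))))) * J1) := by
        rw [master h, e1, hJ1]
    _ = gammaBarMap K H S 1
          ((A1 * (A2 * (A3 * (A4 * (A5 * B1))))) * (B2 * J1)) := by
        simp only [m4assoc]
    _ = gammaBarMap K H S 1
          ((A1 * (A2 * (A3 * (A4 * (A5 * B1))))) * J1) := by
        rw [master h, hJ1, e2, ← hJ1]
    _ = gammaBarMap K H S 1
          ((A1 * (A2 * (A3 * (A4 * A5)))) * (B1 * J1)) := by
        simp only [m4assoc]
    _ = gammaBarMap K H S 1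
          ((A1 * (A2 * (A3 * (A4 * A5)))) * J2) := by
        rw [master h, hJ1, e3, ← hJ2]
    _ = gammaBarMap K H S 1 ((A1 * (A2 * A3)) * ((A4 * A5) * J2)) := by
        simp only [m4assoc]
    _ = gammaBarMap K H S 1 ((A1 * (A2 * A3)) * g12a De) := by
        rw [master h, hd]
    _ = gammaBarMap K H S 1 (A1 * (A2 * (A3 * g12a De))) := by
        simp only [m4assoc]

end Stmt13Aux

set_option maxHeartbeats 4000000 in
set_option synthInstance.maxHeartbeats 400000 in
/-- behaviour of `γ̄` under a twist `G = Σ g_j ⊗ g^j`: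
`γ̄_G = G · Δ(g_j) · γ̄ · (S⊗S)(Gᵀ Δᵀ(g^j))`. -/
theorem stmt13 {K : Type*} [Field K] {H : Type*} [Ring H] [Algebra K H]
    (qb : QuasiBialgebra K H) (S : H →ₗ[K] H) (α β : H)
    (h : IsQuasiAntipode K H qb S α β)
    (G : (T2 K H)ˣ) (hG : IsTwist K H qb G) :
    gammaBarEl K H (twistDelta K H qb.Δ.toLinearMap G)
        (twistPhiE K H qb.Δ.toLinearMap (qb.Φ : T3 K H) G)
        (twistPhiInvE K H qb.Δ.toLinearMap ((qb.Φ⁻¹ : (T3 K H)ˣ) : T3 K H) G)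
        S (twistBeta K H S β G) =
      LinearMap.mul' K (T2 K H)
        (TensorProduct.map
          (LinearMap.mulLeft K (G : T2 K H) ∘ₗ
            LinearMap.mulRight K
              (gammaBarEl K H qb.Δ.toLinearMap (qb.Φ : T3 K H)
                ((qb.Φ⁻¹ : (T3 K H)ˣ) : T3 K H) S β) ∘ₗ
            qb.Δ.toLinearMap)
          (TensorProduct.map S S ∘ₗ
            LinearMap.mulLeft K ((TensorProduct.comm K H H) (G : T2 K H)) ∘ₗ
            (TensorProduct.comm K H H).toLinearMap ∘ₗ qb.Δ.toLinearMap)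
          (G : T2 K H)) := by
  have hPhiInv : twistPhiInvE K H qb.Δ.toLinearMap ((qb.Φ⁻¹ : (T3 K H)ˣ) : T3 K H) G
      = j23a (G : T2 K H) * DRa qb (G : T2 K H) * ((qb.Φ⁻¹ : (T3 K H)ˣ) : T3 K H)
        * DLa qb ((G⁻¹ : (T2 K H)ˣ) : T2 K H) * j12a ((G⁻¹ : (T2 K H)ˣ) : T2 K H) := rfl
  have hPhiE : twistPhiE K H qb.Δ.toLinearMap (qb.Φ : T3 K H) G
      = j12a (G : T2 K H) * DLa qb (G : T2 K H) * (qb.Φ : T3 K H)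
        * DRa qb ((G⁻¹ : (T2 K H)ˣ) : T2 K H) * j23a ((G⁻¹ : (T2 K H)ˣ) : T2 K H) := rfl
  have c1 : ∀ z : T4 K H,
      g12a ((G⁻¹ : (T2 K H)ˣ) : T2 K H) * (g12a (G : T2 K H) * z) = z := by
    intro z
    rw [← m4assoc, ← map_mul, Units.inv_mul]
    exact (congrArg (· * z) g12a.map_one').trans (m4onel z)
  have c2 : ∀ z : T4 K H,
      j123a (DLa qb ((G⁻¹ : (T2 K H)ˣ) : T2 K H)) * (j123a (DLa qb (G : T2 K H)) * z)
        = z := by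
    intro z
    rw [← m4assoc, ← map_mul, ← map_mul, Units.inv_mul]
    exact (congrArg (fun w => j123a w * z) (DLa qb).map_one').trans
      ((congrArg (· * z) j123a.map_one').trans (m4onel z))
  have c3 : ∀ z : T4 K H,
      d12a qb (DLa qb ((G⁻¹ : (T2 K H)ˣ) : T2 K H)) * (j123a (qb.Φ : T3 K H) * z)
        = j123a (qb.Φ : T3 K H) * (d23a qb (DLa qb ((G⁻¹ : (T2 K H)ˣ) : T2 K H)) * z) := by
    intro z
    rw [← m4assoc, E3, m4assoc]
  have hstart : gammaBarEl K H (twistDelta K H qb.Δ.toLinearMap G)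
        (twistPhiE K H qb.Δ.toLinearMap (qb.Φ : T3 K H) G)
        (twistPhiInvE K H qb.Δ.toLinearMap ((qb.Φ⁻¹ : (T3 K H)ˣ) : T3 K H) G)
        S (twistBeta K H S β G)
      = gammaBarMap K H S (twistBeta K H S β G)
          (d12Ga qb G
              (twistPhiInvE K H qb.Δ.toLinearMap ((qb.Φ⁻¹ : (T3 K H)ˣ) : T3 K H) G)
            * j123a (twistPhiE K H qb.Δ.toLinearMap (qb.Φ : T3 K H) G)) := by
    show gammaBarMap K H S (twistBeta K H S β G)
        (d12 K H (twistDelta K H qb.Δ.toLinearMap G)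
            (twistPhiInvE K H qb.Δ.toLinearMap ((qb.Φ⁻¹ : (T3 K H)ˣ) : T3 K H) G)
          * j123 K H (twistPhiE K H qb.Δ.toLinearMap (qb.Φ : T3 K H) G)) = _
    rw [L_d12G, L_j123]
  rw [hstart, absorbA h (twistBeta K H S β G)]
  rw [rhslemma S G (gammaBarEl K H qb.Δ.toLinearMap (qb.Φ : T3 K H)
    ((qb.Φ⁻¹ : (T3 K H)ˣ) : T3 K H) S β)]
  rw [← keylemma h G hG]
  rw [hPhiInv, hPhiE, E9]
  simp only [map_mul]
  simp only [E1, E2, E4, E6, E7, E8]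
  simp only [m4assoc]
  rw [c1, c2, c3]

end QHA
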